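/- (Lemma 7 of the paper, the dependency pruning rule.) Let S = [CL₁, …, CLₙ] be a feasible sequence and let CL_i and CL_j be feasible clusters for S with position maps p_i and p_j, such that CL_i depends on CL_j: every o ∈ λ(S ++ [CL_i]) satisfies o ∈ λ(S ++ [CL_j]) and p_j(o) < p_i(o). Then: (1) λ(S ++ [CL_i]) ⊆ λ(S ++ [CL_j, CL_i]); (2) S ++ [CL_j] is a feasible sequence and CL_i is a feasible cluster for S ++ [CL_j], so S ++ [CL_j, CL_i] is a feasible sequence whose core-object set contains λ(S ++ [CL_i]) and has at least m elements. Consequently (assuming m ≥ 1, which forces d ≥ 1), the candidate pattern ⟨λ(S ++ [CL_i]), route(S ++ [CL_i])⟩ is dominated by ⟨λ(S ++ [CL_j, CL_i]), route(S ++ [CL_j, CL_i])⟩: its object set is contained in the latter's and its route is a d-subpath of the latter's route. -/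

import Mathlib

/-- A cluster: a finite set of objects, a camera, and a position map. -/
structure Cluster (ι C : Type*) where
  O : Finset ι
  c : C
  p : ι → ℕ

variable {ι C : Type*}

/-- `CL` is a valid cluster w.r.t. parameters `m`, `ε` and the travel-path data
(`len` = path lengths, `cam` = camera maps, `s` = entrance timestamps). -/
def IsCluster (m : ℕ) (ε : ℝ) (len : ι → ℕ) (cam : ι → ℕ → C) (s : ι → ℕ → ℝ)
    (CL : Cluster ι C) : Prop :=
  m ≤ CL.O.card ∧
  (∀ o ∈ CL.O, CL.p o < len o ∧ cam o (CL.p o) = CL.c) ∧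
  (∀ o ∈ CL.O, ∀ o' ∈ CL.O, |s o (CL.p o) - s o' (CL.p o')| ≤ ε)

/-- `o` is a core object of the cluster sequence `S` (gap tolerance `d`). -/
def IsCore (d : ℕ) (S : List (Cluster ι C)) (o : ι) : Prop :=
  (∀ CL ∈ S, o ∈ CL.O) ∧
  S.Chain' fun CL CL' => 0 < CL'.p o - CL.p o ∧ CL'.p o - CL.p o ≤ d + 1

/-- `λ(S)`: the set of core objects of the cluster sequence `S`. -/
def coreSet (d : ℕ) (S : List (Cluster ι C)) : Set ι := {o | IsCore d S o}

/-- `CL` is a feasible cluster for the cluster sequence `S`: at least `m` objects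
belong to `CL.O`, are core objects of `S`, and reach `CL` from the last cluster of
`S` within gap tolerance `d`. -/
def FeasibleFor (m d : ℕ) (S : List (Cluster ι C)) (CL : Cluster ι C) : Prop :=
  ∃ CLn ∈ S.getLast?, ∃ T : Finset ι, m ≤ T.card ∧
    ∀ o ∈ T, o ∈ CL.O ∧ o ∈ coreSet d S ∧
      0 < CL.p o - CLn.p o ∧ CL.p o - CLn.p o ≤ d + 1

/-- `S` is a feasible sequence: it consists of a single cluster, or its last cluster
is a feasible cluster for the preceding prefix. -/
def FeasibleSeq (m d : ℕ) (S : List (Cluster ι C)) : Prop :=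
  (∃ CL, S = [CL]) ∨ (∃ S' CL, S = S' ++ [CL] ∧ FeasibleFor m d S' CL)

/-- `⟨O, P⟩` is a relaxed co-movement pattern (VPlatoon) for parameters `m`, `k`,
`d`, `ε`: `O` is a finite set of at least `m` objects, `P` has length at least `k`,
and there are witnessing positions `q` making `P` a `d`-subpath of every member's
travel path along which `O` is `ε`-close. -/
def IsPattern (m k d : ℕ) (ε : ℝ) (len : ι → ℕ) (cam : ι → ℕ → C) (s : ι → ℕ → ℝ)
    (O : Set ι) (P : List C) : Prop :=
  O.Finite ∧ m ≤ O.ncard ∧ k ≤ P.length ∧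
  ∃ q : ι → ℕ → ℕ,
    (∀ o ∈ O, ∀ t : ℕ, (ht : t < P.length) → q o t < len o ∧ cam o (q o t) = P[t]) ∧
    (∀ o ∈ O, ∀ t : ℕ, t + 1 < P.length →
      q o t < q o (t + 1) ∧ q o (t + 1) - q o t ≤ d + 1) ∧
    (∀ t : ℕ, t < P.length → ∀ o ∈ O, ∀ o' ∈ O, |s o (q o t) - s o' (q o' t)| ≤ ε)

/-- `P₁` is a `d`-subpath of `P₂` (as camera sequences): there is a strictly
increasing position map with consecutive gaps at most `d + 1` matching cameras. -/
def IsDSubpath (d : ℕ) (P₁ P₂ : List C) : Prop :=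
  ∃ g : ℕ → ℕ,
    (∀ t : ℕ, (ht : t < P₁.length) → ∃ h : g t < P₂.length, P₁[t] = P₂[g t]) ∧
    (∀ t : ℕ, t + 1 < P₁.length → g t < g (t + 1) ∧ g (t + 1) - g t ≤ d + 1)

/-- Feasible cluster `CL_i` depends on feasible cluster `CL_j` (for the same
feasible sequence `S`): every object `o ∈ λ(S ++ [CL_i])` also satisfies
`o ∈ λ(S ++ [CL_j])` and `p_j(o) < p_i(o)`. -/
def ClusterDependsOn {ι C : Type*} (d : ℕ) (S : List (Cluster ι C))
    (CLi CLj : Cluster ι C) : Prop :=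
  ∀ o ∈ coreSet d (S ++ [CLi]), o ∈ coreSet d (S ++ [CLj]) ∧ CLj.p o < CLi.p o

/-!
An object of `λ(S ++ [CL_i])` also lies in `λ(S ++ [CL_j])` and visits `CL_j` strictly before
`CL_i`; since its jump from the last cluster of `S` to `CL_i` is already at most `d + 1`, the
two shorter jumps through `CL_j` are too, so it stays a core object once `CL_j` is inserted.
Feasibility of `CL` for a nonempty `S` just says that `λ(S ++ [CL])` has at least `m`
elements, so it transfers along this inclusion. Two strict steps inside one jump of at most
`d + 1` force `d ≥ 1`, which is exactly what the `d`-subpath skipping `CL_j` needs.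
-/

theorem isDSubpath_append_cons {d : ℕ} (hd : 1 ≤ d) (L M : List C) (x : C) :
    IsDSubpath d (L ++ M) (L ++ x :: M) := by
  refine ⟨fun t ↦ if t < L.length then t else t + 1, fun t ht ↦ ?_, fun t ht ↦ ?_⟩
  · simp only [List.length_append] at ht
    by_cases htL : t < L.length
    · simp only [htL, if_true, List.length_append, List.length_cons]
      exact ⟨by omega, by rw [List.getElem_append_left htL, List.getElem_append_left htL]⟩
    · simp only [htL, if_false, List.length_append, List.length_cons]
      refine ⟨by omega, ?_⟩
      rw [List.getElem_append_right (by omega), List.getElem_append_right (by omega)]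
      simp only [show t + 1 - L.length = (t - L.length) + 1 by omega, List.getElem_cons_succ]
  · dsimp only
    split_ifs <;> omega

section

variable {m d : ℕ} {S : List (Cluster ι C)} {CL CLi CLj CLn : Cluster ι C} {o : ι}

theorem isCore_append_singleton_iff (hlast : CLn ∈ S.getLast?) :
    IsCore d (S ++ [CL]) o ↔ IsCore d S o ∧ o ∈ CL.O ∧
      0 < CL.p o - CLn.p o ∧ CL.p o - CLn.p o ≤ d + 1 := by
  have hlast' : S.getLast? = some CLn := hlast
  simp only [IsCore, List.Chain', List.isChain_append, List.mem_append, List.mem_singleton,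
    hlast', List.head?_cons, Option.mem_def, Option.some.injEq, forall_eq', or_imp,
    forall_and, forall_eq, List.isChain_singleton]
  tauto

theorem feasibleFor_iff :
    FeasibleFor m d S CL ↔
      S ≠ [] ∧ ∃ T : Finset ι, m ≤ T.card ∧ (T : Set ι) ⊆ coreSet d (S ++ [CL]) := by
  constructor
  · rintro ⟨CLn, hlast, T, hT, hTcore⟩
    refine ⟨fun hS ↦ by simp [hS] at hlast, T, hT, fun o ho ↦ ?_⟩
    obtain ⟨hO, hcore, hgap⟩ := hTcore o ho
    exact (isCore_append_singleton_iff hlast).2 ⟨hcore, hO, hgap⟩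
  · rintro ⟨hS, T, hT, hTcore⟩
    have hlast : S.getLast hS ∈ S.getLast? := List.getLast?_eq_some_getLast hS
    refine ⟨_, hlast, T, hT, fun o ho ↦ ?_⟩
    obtain ⟨hcore, hO, hgap⟩ := (isCore_append_singleton_iff hlast).1 (hTcore ho)
    exact ⟨hO, hcore, hgap⟩

theorem coreSet_finite (hS : S ≠ []) : (coreSet d S).Finite := by
  obtain ⟨CL, hCL⟩ := List.exists_mem_of_ne_nil S hS
  exact CL.O.finite_toSet.subset fun o ho ↦ ho.1 CL hCL

theorem FeasibleFor.le_ncard_coreSet (h : FeasibleFor m d S CL) :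
    m ≤ (coreSet d (S ++ [CL])).ncard := by
  obtain ⟨-, T, hT, hTcore⟩ := feasibleFor_iff.1 h
  calc m ≤ T.card := hT
    _ = (T : Set ι).ncard := (Set.ncard_coe_finset T).symm
    _ ≤ _ := Set.ncard_le_ncard hTcore (coreSet_finite (by simp))

theorem ClusterDependsOn.isCore_append_pair (hdep : ClusterDependsOn d S CLi CLj)
    (hlast : CLn ∈ S.getLast?) (ho : IsCore d (S ++ [CLi]) o) :
    IsCore d (S ++ [CLj, CLi]) o := by
  obtain ⟨hj, hji⟩ := hdep o ho
  obtain ⟨-, hOi, -, hni⟩ := (isCore_append_singleton_iff hlast).1 ho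
  obtain ⟨-, -, hnj, -⟩ := (isCore_append_singleton_iff hlast).1 hj
  rw [← List.singleton_append, ← List.append_assoc,
    isCore_append_singleton_iff (by simp : CLj ∈ (S ++ [CLj]).getLast?)]
  exact ⟨hj, hOi, by omega, by omega⟩

theorem ClusterDependsOn.coreSet_subset (hdep : ClusterDependsOn d S CLi CLj) (hS : S ≠ []) :
    coreSet d (S ++ [CLi]) ⊆ coreSet d (S ++ [CLj, CLi]) :=
  fun _ ho ↦ hdep.isCore_append_pair (List.getLast?_eq_some_getLast hS) ho

theorem ClusterDependsOn.feasibleFor_append (hdep : ClusterDependsOn d S CLi CLj)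
    (hfi : FeasibleFor m d S CLi) : FeasibleFor m d (S ++ [CLj]) CLi := by
  obtain ⟨hS, T, hT, hTcore⟩ := feasibleFor_iff.1 hfi
  refine feasibleFor_iff.2 ⟨by simp, T, hT, ?_⟩
  simpa using hTcore.trans (hdep.coreSet_subset hS)

theorem ClusterDependsOn.one_le (hdep : ClusterDependsOn d S CLi CLj) (hS : S ≠ [])
    (hne : (coreSet d (S ++ [CLi])).Nonempty) : 1 ≤ d := by
  obtain ⟨o, ho⟩ := hne
  have hlast := List.getLast?_eq_some_getLast hS
  obtain ⟨hj, hji⟩ := hdep o ho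
  obtain ⟨-, -, -, hni⟩ := (isCore_append_singleton_iff hlast).1 ho
  obtain ⟨-, -, hnj, -⟩ := (isCore_append_singleton_iff hlast).1 hj
  omega

end

theorem dependency_pruning_rule_general {ι C : Type*} (m d : ℕ) (hm : 1 ≤ m)
    (S : List (Cluster ι C))
    (CLi CLj : Cluster ι C)
    (hfi : FeasibleFor m d S CLi) (hfj : FeasibleFor m d S CLj)
    (hdep : ClusterDependsOn d S CLi CLj) :
    coreSet d (S ++ [CLi]) ⊆ coreSet d (S ++ [CLj, CLi]) ∧
    FeasibleSeq m d (S ++ [CLj]) ∧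
    FeasibleFor m d (S ++ [CLj]) CLi ∧
    FeasibleSeq m d (S ++ [CLj, CLi]) ∧
    m ≤ (coreSet d (S ++ [CLj, CLi])).ncard ∧
    (1 ≤ d) ∧
    IsDSubpath d ((S ++ [CLi]).map Cluster.c) ((S ++ [CLj, CLi]).map Cluster.c) := by
  have hS : S ≠ [] := (feasibleFor_iff.1 hfi).1
  have hfi' : FeasibleFor m d (S ++ [CLj]) CLi := hdep.feasibleFor_append hfi
  have hcard : m ≤ (coreSet d (S ++ [CLj, CLi])).ncard := by
    simpa using hfi'.le_ncard_coreSet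
  have hd : 1 ≤ d := hdep.one_le hS <|
    Set.nonempty_of_ncard_ne_zero (by have := hfi.le_ncard_coreSet; omega)
  refine ⟨hdep.coreSet_subset hS, Or.inr ⟨S, CLj, rfl, hfj⟩, hfi',
    Or.inr ⟨S ++ [CLj], CLi, by simp, hfi'⟩, hcard, hd, ?_⟩
  simpa using isDSubpath_append_cons hd (S.map Cluster.c) [CLi.c] CLj.c

/-- Lemma 7 of the paper (the dependency pruning rule): if the feasible cluster
`CL_i` depends on the feasible cluster `CL_j` for the feasible sequence `S`, then
(1) `λ(S ++ [CL_i]) ⊆ λ(S ++ [CL_j, CL_i])`; (2) `S ++ [CL_j]` is a feasible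
sequence, `CL_i` is a feasible cluster for `S ++ [CL_j]`, so
`S ++ [CL_j, CL_i]` is a feasible sequence whose core-object set contains
`λ(S ++ [CL_i])` and has at least `m` elements; consequently (assuming `m ≥ 1`),
the candidate pattern `⟨λ(S ++ [CL_i]), route(S ++ [CL_i])⟩` is dominated by
`⟨λ(S ++ [CL_j, CL_i]), route(S ++ [CL_j, CL_i])⟩`: its object set is contained
in the latter's and its route is a `d`-subpath of the latter's route. -/
theorem dependency_pruning_rule {ι C : Type*} (m d : ℕ) (hm : 1 ≤ m)
    (S : List (Cluster ι C)) (hSfeas : FeasibleSeq m d S)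
    (CLi CLj : Cluster ι C)
    (hfi : FeasibleFor m d S CLi) (hfj : FeasibleFor m d S CLj)
    (hdep : ClusterDependsOn d S CLi CLj) :
    coreSet d (S ++ [CLi]) ⊆ coreSet d (S ++ [CLj, CLi]) ∧
    FeasibleSeq m d (S ++ [CLj]) ∧
    FeasibleFor m d (S ++ [CLj]) CLi ∧
    FeasibleSeq m d (S ++ [CLj, CLi]) ∧
    m ≤ (coreSet d (S ++ [CLj, CLi])).ncard ∧
    (1 ≤ d) ∧
    IsDSubpath d ((S ++ [CLi]).map Cluster.c) ((S ++ [CLj, CLi]).map Cluster.c) :=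
  dependency_pruning_rule_general m d hm S CLi CLj hfi hfj hdep
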